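/- arXiv:2602.01907 — 2 statements merged into one kernel-verified Lean document; each statement's English description precedes it below -/
import Mathlib

section
/- Assume Σ_{i=1}^n k_i = (1−n)/2. Let Ω ⊆ ℝ^{n+1} be open and axially symmetric, and let f : Ω → ℝ_n be of class C¹ with S̲f = 0 at every point of Ω whose coordinates x_1,…,x_n are all nonzero. Then Df(x) = ϑ̄f(x) at every such point x. -/
noncomputable section

open scoped BigOperators

namespace Dunkl

/-! ### An ℓ¹ norm on an arbitrary real vector space, via a Hamel basis -/

variable {ι V : Type*} [AddCommGroup V] [Module ℝ V]

def l1fun (b : Module.Basis ι ℝ V) (v : V) : ℝ := ∑ a ∈ (b.repr v).support, |b.repr v a|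

lemma l1fun_eq_sum (b : Module.Basis ι ℝ V) (v : V) {s : Finset ι} (hs : (b.repr v).support ⊆ s) :
    l1fun b v = ∑ a ∈ s, |b.repr v a| := by
  unfold l1fun
  apply Finset.sum_subset hs
  intro a _ ha
  simp [Finsupp.notMem_support_iff.mp ha]

def l1AddGroupNorm (b : Module.Basis ι ℝ V) : AddGroupNorm V where
  toFun := l1fun b
  map_zero' := by simp [l1fun]
  add_le' := by
    intro x y
    classical
    set s := (b.repr x).support ∪ (b.repr y).support with hs
    have hxy : (b.repr (x + y)).support ⊆ s := by
      rw [map_add]; exact Finsupp.support_add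
    calc l1fun b (x + y) = ∑ a ∈ s, |b.repr (x + y) a| := l1fun_eq_sum b _ hxy
      _ ≤ ∑ a ∈ s, (|b.repr x a| + |b.repr y a|) := by
          refine Finset.sum_le_sum fun a _ => ?_
          rw [map_add]
          exact abs_add_le _ _
      _ = (∑ a ∈ s, |b.repr x a|) + ∑ a ∈ s, |b.repr y a| := Finset.sum_add_distrib
      _ = l1fun b x + l1fun b y := by
          rw [← l1fun_eq_sum b x Finset.subset_union_left,
            ← l1fun_eq_sum b y Finset.subset_union_right]
  neg' := by
    intro x
    simp [l1fun, Finsupp.support_neg]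
  eq_zero_of_map_eq_zero' := by
    intro x hx
    by_contra hx0
    have hsupp : (b.repr x).support.Nonempty := by
      rw [Finsupp.support_nonempty_iff]
      simpa using hx0
    obtain ⟨a, ha⟩ := hsupp
    have h1 : |b.repr x a| = 0 := by
      have := (Finset.sum_eq_zero_iff_of_nonneg
        (fun i _ => abs_nonneg (b.repr x i))).mp hx a ha
      exact this
    exact Finsupp.mem_support_iff.mp ha (abs_eq_zero.mp h1)

/-! ### The Clifford algebra ℝ_n = Cl(0,n) -/

def Qneg (n : ℕ) : QuadraticForm ℝ (Fin n → ℝ) :=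
  QuadraticMap.weightedSumSquares ℝ (fun _ : Fin n => (-1 : ℝ))

/-- The real Clifford algebra `Cl(0,n)`. -/
abbrev Cl (n : ℕ) : Type := CliffordAlgebra (Qneg n)

instance (n : ℕ) : NormedAddCommGroup (Cl n) :=
  AddGroupNorm.toNormedAddCommGroup (l1AddGroupNorm (Module.Basis.ofVectorSpace ℝ (Cl n)))

lemma Cl.norm_def (n : ℕ) (v : Cl n) :
    ‖v‖ = l1fun (Module.Basis.ofVectorSpace ℝ (Cl n)) v := rfl

instance (n : ℕ) : NormedSpace ℝ (Cl n) where
  norm_smul_le := by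
    intro c x
    classical
    set b := Module.Basis.ofVectorSpace ℝ (Cl n)
    have hsub : (b.repr (c • x)).support ⊆ (b.repr x).support := by
      rw [map_smul]
      exact Finsupp.support_smul
    rw [Cl.norm_def, Cl.norm_def, l1fun_eq_sum b _ hsub, l1fun]
    rw [Real.norm_eq_abs, Finset.mul_sum]
    refine le_of_eq (Finset.sum_congr rfl fun a _ => ?_)
    rw [map_smul, Finsupp.smul_apply, smul_eq_mul, abs_mul]

/-- The generators `e_1, …, e_n` of `Cl(0,n)`. -/
def gen {n : ℕ} (i : Fin n) : Cl n := CliffordAlgebra.ι (Qneg n) (Pi.single i 1)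


/-! ### Points, paravectors and differential operators -/

/-- Points of `ℝ^{n+1}`, with coordinates `x 0, x 1, …, x n`. -/
abbrev Pt (n : ℕ) : Type := Fin (n+1) → ℝ

variable {n : ℕ}

/-- The imaginary part `x̲ = Σ x_i e_i` of a point, as an element of `Cl(0,n)`. -/
def im (x : Pt n) : Cl n := ∑ i : Fin n, x i.succ • gen i

/-- The paravector `x_0 + Σ x_i e_i` associated to a point of `ℝ^{n+1}`. -/
def par (x : Pt n) : Cl n := algebraMap ℝ (Cl n) (x 0) + im x

/-- `‖x̲‖² = Σ_{i=1}^n x_i²`. -/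
def normSqIm (x : Pt n) : ℝ := ∑ i : Fin n, (x i.succ)^2

/-- `x̲⁻¹ = -x̲/‖x̲‖²` (junk value `0` when `x̲ = 0`). -/
def imInv (x : Pt n) : Cl n := -((normSqIm x)⁻¹ • im x)

/-- The Clifford conjugate `x^c = x_0 - x̲`, as a point of `ℝ^{n+1}`. -/
def conj (x : Pt n) : Pt n := fun t => if t = 0 then x t else -(x t)

/-- The reflection `r_i`, changing the sign of the coordinate `x_i` (`1 ≤ i ≤ n`). -/
def refl (i : Fin n) (x : Pt n) : Pt n := fun t => if t = i.succ then -(x t) else x t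

/-- The partial derivative `∂f/∂x_i` of an `ℝ_n`-valued function. -/
def pd (i : Fin (n+1)) (f : Pt n → Cl n) : Pt n → Cl n :=
  fun x => fderiv ℝ f x (Pi.single i 1)

/-- The Euler operator `𝔼 f = Σ_{i=1}^n x_i ∂_{x_i} f`. -/
def euler (f : Pt n → Cl n) : Pt n → Cl n :=
  fun x => ∑ i : Fin n, x i.succ • pd i.succ f x

/-- The Cauchy-Riemann operator `∂̄f = ∂_{x_0}f + Σ e_i ∂_{x_i} f`. -/
def CRop (f : Pt n → Cl n) : Pt n → Cl n :=
  fun x => pd 0 f x + ∑ i : Fin n, gen i * pd i.succ f x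

/-- `ϑ̄f(x) = ∂_{x_0}f(x) − x̲⁻¹·(𝔼f)(x)`. -/
def thetaBar (f : Pt n → Cl n) : Pt n → Cl n :=
  fun x => pd 0 f x - imInv x * euler f x

/-- The spherical Dirac operator `Γf = -Σ_{i<j} e_i e_j (x_i ∂_{x_j}f − x_j ∂_{x_i}f)`. -/
def sphDirac (f : Pt n → Cl n) : Pt n → Cl n :=
  fun x => -∑ i : Fin n, ∑ j : Fin n,
    if i < j then gen i * (gen j * (x i.succ • pd j.succ f x - x j.succ • pd i.succ f x)) else 0

/-! ### Dunkl operators for the reflection group ℤ₂ⁿ -/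

/-- The Dunkl operator `T_i f(x) = ∂_{x_i}f(x) + (k_i/x_i)(f(x) − f(r_i x))`. -/
def T (k : Fin n → ℝ) (i : Fin n) (f : Pt n → Cl n) : Pt n → Cl n :=
  fun x => pd i.succ f x + (k i / x i.succ) • (f x - f (refl i x))

/-- The Dunkl-Dirac operator `D̲f = Σ e_i T_i f`. -/
def dunklDirac (k : Fin n → ℝ) (f : Pt n → Cl n) : Pt n → Cl n :=
  fun x => ∑ i : Fin n, gen i * T k i f x

/-- The Dunkl-Cauchy-Riemann operator `Df = ∂_{x_0}f + D̲f`. -/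
def dunklCR (k : Fin n → ℝ) (f : Pt n → Cl n) : Pt n → Cl n :=
  fun x => pd 0 f x + dunklDirac k f x

/-- The Dunkl Laplacian `Δ_D f = Σ T_i(T_i f)`. -/
def dunklLap (k : Fin n → ℝ) (f : Pt n → Cl n) : Pt n → Cl n :=
  fun x => ∑ i : Fin n, T k i (T k i f) x

/-- The Casimir operator `S̲f = ½(x̲·(D̲f) − D̲(x̲f) − f)`. -/
def casimir (k : Fin n → ℝ) (f : Pt n → Cl n) : Pt n → Cl n :=
  fun x => (2:ℝ)⁻¹ • (im x * dunklDirac k f x - dunklDirac k (fun y => im y * f y) x - f x)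

/-- The Casimir operator in the form `S̲f = x̲·(D̲f) + 𝔼f`
(valid when `Σ k_i = (1−n)/2`). -/
def scas (k : Fin n → ℝ) (f : Pt n → Cl n) : Pt n → Cl n :=
  fun x => im x * dunklDirac k f x + euler f x

/-- `S̃f = Σ_{i=1}^n k_i (f − f∘r_i)`. -/
def stilde (k : Fin n → ℝ) (f : Pt n → Cl n) : Pt n → Cl n :=
  fun x => ∑ i : Fin n, k i • (f x - f (refl i x))

/-- The spherical value `f_s°(x) = ½(f(x) + f(x^c))`. -/
def sval (f : Pt n → Cl n) : Pt n → Cl n :=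
  fun x => (2:ℝ)⁻¹ • (f x + f (conj x))

/-- `S′f = S̃(f_s°)`. -/
def sprime (k : Fin n → ℝ) (f : Pt n → Cl n) : Pt n → Cl n :=
  stilde k (sval f)

/-- `S″f = S̃((x̲f)_s°)`. -/
def sdprime (k : Fin n → ℝ) (f : Pt n → Cl n) : Pt n → Cl n :=
  stilde k (sval (fun y => im y * f y))

/-! ### Symmetric sets and slice functions -/

/-- A point has all the coordinates `x_1, …, x_n` nonzero. -/
def allNZ (x : Pt n) : Prop := ∀ i : Fin n, x i.succ ≠ 0

/-- A set invariant under all the reflections `r_1, …, r_n`. -/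
def ReflInv (Ω : Set (Pt n)) : Prop := ∀ i : Fin n, ∀ x ∈ Ω, refl i x ∈ Ω

/-- An axially symmetric subset of `ℝ^{n+1}`. -/
def AxSymm (Ω : Set (Pt n)) : Prop :=
  ∀ x ∈ Ω, ∀ y : Pt n, y 0 = x 0 → normSqIm y = normSqIm x → y ∈ Ω

/-- The set `𝕊` of imaginary units of the paravector space. -/
def unitSphere (n : ℕ) : Set (Pt n) := {J | J 0 = 0 ∧ normSqIm J = 1}

/-- The point `α + βJ` of `ℝ^{n+1}`. -/
def ptOf (α β : ℝ) (J : Pt n) : Pt n := fun t => (if t = 0 then α else 0) + β * J t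

/-- The set `D = {(α,β) : α + βJ ∈ Ω for all J ∈ 𝕊}`. -/
def sliceDom (Ω : Set (Pt n)) : Set (ℝ × ℝ) :=
  {p | ∀ J ∈ unitSphere n, ptOf p.1 p.2 J ∈ Ω}

/-- `f` is a slice function on `Ω`. -/
def IsSlice (Ω : Set (Pt n)) (f : Pt n → Cl n) : Prop :=
  ∃ F0 F1 : ℝ × ℝ → Cl n,
    (∀ p ∈ sliceDom Ω, F0 (p.1, -p.2) = F0 p) ∧
    (∀ p ∈ sliceDom Ω, F1 (p.1, -p.2) = -F1 p) ∧
    (∀ p ∈ sliceDom Ω, ∀ J ∈ unitSphere n, f (ptOf p.1 p.2 J) = F0 p + im J * F1 p)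

/-- `f` is a slice function of class `C¹` on `Ω`. -/
def IsSliceC1 (Ω : Set (Pt n)) (f : Pt n → Cl n) : Prop :=
  ∃ F0 F1 : ℝ × ℝ → Cl n,
    ContDiffOn ℝ 1 F0 (sliceDom Ω) ∧ ContDiffOn ℝ 1 F1 (sliceDom Ω) ∧
    (∀ p ∈ sliceDom Ω, F0 (p.1, -p.2) = F0 p) ∧
    (∀ p ∈ sliceDom Ω, F1 (p.1, -p.2) = -F1 p) ∧
    (∀ p ∈ sliceDom Ω, ∀ J ∈ unitSphere n, f (ptOf p.1 p.2 J) = F0 p + im J * F1 p)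

/-- `f` is slice-regular on `Ω`: it is an (inclusive) slice function of class `C¹`
whose inducing stem function satisfies the Cauchy-Riemann equations. -/
def IsSliceReg (Ω : Set (Pt n)) (f : Pt n → Cl n) : Prop :=
  ∃ F0 F1 : ℝ × ℝ → Cl n,
    ContDiffOn ℝ 1 F0 (sliceDom Ω) ∧ ContDiffOn ℝ 1 F1 (sliceDom Ω) ∧
    (∀ p ∈ sliceDom Ω,
      fderivWithin ℝ F0 (sliceDom Ω) p (1, 0) = fderivWithin ℝ F1 (sliceDom Ω) p (0, 1) ∧
      fderivWithin ℝ F0 (sliceDom Ω) p (0, 1) = -(fderivWithin ℝ F1 (sliceDom Ω) p (1, 0))) ∧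
    (∀ p ∈ sliceDom Ω, F0 (p.1, -p.2) = F0 p) ∧
    (∀ p ∈ sliceDom Ω, F1 (p.1, -p.2) = -F1 p) ∧
    (∀ p ∈ sliceDom Ω, ∀ J ∈ unitSphere n, f (ptOf p.1 p.2 J) = F0 p + im J * F1 p)

/-- Polynomial functions `ℝ^{n+1} → ℝ_n`. -/
def IsPolyFun (f : Pt n → Cl n) : Prop :=
  ∃ (s : Finset (Fin (n+1) → ℕ)) (a : (Fin (n+1) → ℕ) → Cl n),
    ∀ x : Pt n, f x = ∑ ν ∈ s, (∏ i : Fin (n+1), x i ^ ν i) • a ν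


/-! ### Intermediate Dunkl-Dirac operators associated with a subset `A ⊆ {1,…,n}` -/

/-- `x̲_A = Σ_{i∈A} x_i e_i`. -/
def imA (A : Finset (Fin n)) (x : Pt n) : Cl n := ∑ i ∈ A, x i.succ • gen i

/-- `𝔼_A f = Σ_{i∈A} x_i ∂_{x_i} f`. -/
def eulerA (A : Finset (Fin n)) (f : Pt n → Cl n) : Pt n → Cl n :=
  fun x => ∑ i ∈ A, x i.succ • pd i.succ f x

/-- `D̲_A f = Σ_{i∈A} e_i T_i f`. -/
def dunklDiracA (k : Fin n → ℝ) (A : Finset (Fin n)) (f : Pt n → Cl n) : Pt n → Cl n :=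
  fun x => ∑ i ∈ A, gen i * T k i f x

/-- `S̲_A f = ½(x̲_A (D̲_A f) − D̲_A(x̲_A f) − f)`. -/
def casimirA (k : Fin n → ℝ) (A : Finset (Fin n)) (f : Pt n → Cl n) : Pt n → Cl n :=
  fun x => (2:ℝ)⁻¹ •
    (imA A x * dunklDiracA k A f x - dunklDiracA k A (fun y => imA A y * f y) x - f x)

/-- `S̲_A f = x̲_A (D̲_A f) + 𝔼_A f` (the form valid for `A`-admissible multiplicities). -/
def scasA (k : Fin n → ℝ) (A : Finset (Fin n)) (f : Pt n → Cl n) : Pt n → Cl n :=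
  fun x => imA A x * dunklDiracA k A f x + eulerA A f x

/-- The composition `r_A` of the reflections `r_i`, `i ∈ A`. -/
def reflA (A : Finset (Fin n)) (x : Pt n) : Pt n :=
  fun t => Fin.cases (x 0) (fun i => if i ∈ A then -(x i.succ) else x i.succ) t

/-- The `A`-spherical value `f°_{s,A}(x) = ½(f(x) + f(r_A x))`. -/
def svalA (A : Finset (Fin n)) (f : Pt n → Cl n) : Pt n → Cl n :=
  fun x => (2:ℝ)⁻¹ • (f x + f (reflA A x))

/-- `S̃_A f = Σ_{i∈A} k_i (f − f∘r_i)`. -/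
def stildeA (k : Fin n → ℝ) (A : Finset (Fin n)) (f : Pt n → Cl n) : Pt n → Cl n :=
  fun x => ∑ i ∈ A, k i • (f x - f (refl i x))

/-- `S′_A f = S̃_A(f°_{s,A})`. -/
def sprimeA (k : Fin n → ℝ) (A : Finset (Fin n)) (f : Pt n → Cl n) : Pt n → Cl n :=
  stildeA k A (svalA A f)

/-- `S″_A f = S̃_A((x̲_A f)°_{s,A})`. -/
def sdprimeA (k : Fin n → ℝ) (A : Finset (Fin n)) (f : Pt n → Cl n) : Pt n → Cl n :=
  stildeA k A (svalA A (fun y => imA A y * f y))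

/-- The multiplicities `(k_i)_{i∈A}` are `A`-admissible: nonpositive on `A`, at most one of
them vanishing, and `Σ_{i∈A} k_i = (1−|A|)/2`. -/
def AdmissibleOn (A : Finset (Fin n)) (k : Fin n → ℝ) : Prop :=
  (∀ i ∈ A, k i ≤ 0) ∧ (∀ i ∈ A, ∀ j ∈ A, k i = 0 → k j = 0 → i = j) ∧
  (∑ i ∈ A, k i = (1 - (A.card : ℝ)) / 2)

/-- The condition `𝒮_A f = 0` on `Ω`:  `S̲_A f` vanishes at every point of `Ω` whose
coordinates `x_i`, `i ∈ A`, are all nonzero, and `S′_A f = S″_A f = 0` on `Ω`. -/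
def SAvanishes (k : Fin n → ℝ) (A : Finset (Fin n)) (Ω : Set (Pt n))
    (f : Pt n → Cl n) : Prop :=
  (∀ x ∈ Ω, (∀ i ∈ A, x i.succ ≠ 0) → scasA k A f x = 0) ∧
  (∀ x ∈ Ω, sprimeA k A f x = 0) ∧
  (∀ x ∈ Ω, sdprimeA k A f x = 0)

/-- An `A`-circular subset of `ℝ^{n+1}`. -/
def ACircular (A : Finset (Fin n)) (Ω : Set (Pt n)) : Prop :=
  ∀ x ∈ Ω, ∀ y : Pt n, y 0 = x 0 → (∀ i : Fin n, i ∉ A → y i.succ = x i.succ) →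
    (∑ i ∈ A, (y i.succ)^2) = (∑ i ∈ A, (x i.succ)^2) → y ∈ Ω

end Dunkl

namespace Dunkl

lemma im_eq_iota (n : ℕ) (x : Pt n) :
    im x = CliffordAlgebra.ι (Qneg n) (fun i => x i.succ) := by
  unfold im gen
  simp_rw [← map_smul]
  rw [← map_sum]
  congr 1
  funext i
  simp [Finset.sum_apply, Pi.single_apply]

lemma im_sq (n : ℕ) (x : Pt n) :
    im x * im x = algebraMap ℝ (Cl n) (-(normSqIm x)) := by
  rw [im_eq_iota, CliffordAlgebra.ι_sq_scalar]
  congr 1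
  unfold Qneg normSqIm
  rw [QuadraticMap.weightedSumSquares_apply]
  simp [sq, Finset.mul_sum]

end Dunkl

open Dunkl

/-- If `Σ k_i = (1−n)/2` and `S̲f = 0` away from the coordinate hyperplanes,
then `Df = ϑ̄f` at every such point. -/
theorem statement13 (n : ℕ) (hn : 1 ≤ n) (k : Fin n → ℝ)
    (hks : ∑ i : Fin n, k i = (1 - (n : ℝ)) / 2) (Ω : Set (Pt n)) (hopen : IsOpen Ω)
    (hax : AxSymm Ω) (f : Pt n → Cl n) (hf : ContDiffOn ℝ 1 f Ω)
    (hS : ∀ x ∈ Ω, allNZ x → scas k f x = 0) :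
    ∀ x ∈ Ω, allNZ x → dunklCR k f x = thetaBar f x := by
  intro x hx hnz
  have h0 := hS x hx hnz
  unfold scas at h0
  have hD : im x * dunklDirac k f x = -(euler f x) := by
    linear_combination (norm := module) h0
  have hN : 0 < normSqIm x := by
    refine Finset.sum_pos' (fun i _ => sq_nonneg _) ⟨⟨0, hn⟩, Finset.mem_univ _, ?_⟩
    have := hnz ⟨0, hn⟩
    positivity
  have hD : dunklDirac k f x = (normSqIm x)⁻¹ • (im x * euler f x) := by
    have h2 : im x * (im x * dunklDirac k f x) = im x * -(euler f x) := by rw [hD]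
    rw [← mul_assoc, im_sq, Algebra.algebraMap_eq_smul_one, smul_mul_assoc, one_mul,
      neg_smul] at h2
    have h3 : normSqIm x • dunklDirac k f x = im x * euler f x := by
      rw [mul_neg] at h2
      exact neg_injective h2
    rw [← h3, smul_smul, inv_mul_cancel₀ hN.ne', one_smul]
  unfold dunklCR thetaBar imInv
  rw [hD, neg_mul, sub_neg_eq_add, smul_mul_assoc]
end
end

section
/- Let A, B ⊆ {1,…,n} with A ∩ B = ∅, let Ω ⊆ ℝ^{n+1} be open and invariant under every reflection r_i, and let f : Ω → ℝ_n be of class C². Then at every point of Ω whose coordinates x_1,…,x_n are all nonzero: (1) D̲_A(x̲_B f) + x̲_B·(D̲_A f) = 0; (2) D̲_A(D̲_B f) + D̲_B(D̲_A f) = 0; (3) S̲_A(x̲_B f) = x̲_B·(S̲_A f); (4) S̲_A(D̲_B f) = D̲_B(S̲_A f), where S̲_A f = ½(x̲_A·(D̲_A f) − D̲_A(x̲_A f) − f). -/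
noncomputable section

open scoped BigOperators

namespace Dunkl

/-! ### An ℓ¹ norm on an arbitrary real vector space, via a Hamel basis -/

variable {ι V : Type*} [AddCommGroup V] [Module ℝ V]

variable {n : ℕ}

variable {n : ℕ}

lemma Qneg_single (i : Fin n) : Qneg n (Pi.single i 1) = -1 := by
  rw [Qneg, QuadraticMap.weightedSumSquares_apply]
  rw [Finset.sum_eq_single i (by intro b _ hb; simp [Pi.single_eq_of_ne hb]) (by simp)]
  simp

lemma gen_sq (i : Fin n) : gen i * gen i = algebraMap ℝ (Cl n) (-1) := by
  rw [gen, CliffordAlgebra.ι_sq_scalar, Qneg_single]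

lemma gen_anticomm {i j : Fin n} (h : i ≠ j) :
    gen i * gen j = -(gen j * gen i) := by
  have hp : QuadraticMap.polar (Qneg n) (Pi.single i 1) (Pi.single j 1) = 0 := by
    rw [Qneg, QuadraticMap.polar, QuadraticMap.weightedSumSquares_apply,
      QuadraticMap.weightedSumSquares_apply, QuadraticMap.weightedSumSquares_apply,
      ← Finset.sum_sub_distrib, ← Finset.sum_sub_distrib]
    apply Finset.sum_eq_zero
    intro t _
    simp only [Pi.add_apply, smul_eq_mul, Pi.single_apply]
    rcases eq_or_ne t i with rfl|hi <;> rcases eq_or_ne t j with rfl|hj <;> simp_all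
  have := CliffordAlgebra.ι_mul_ι_add_swap (Q := Qneg n) (Pi.single i 1) (Pi.single j 1)
  rw [hp] at this
  simp only [map_zero] at this
  rw [gen, gen]
  linear_combination (norm := module) this

/-- ordered product of generators over a finset -/
def G (s : Finset (Fin n)) : Cl n := ((s.sort (· ≤ ·)).map gen).prod

lemma G_empty : G (∅ : Finset (Fin n)) = 1 := by simp [G]

lemma G_insert {a : Fin n} {s : Finset (Fin n)} (h1 : ∀ b ∈ s, a ≤ b) (h2 : a ∉ s) :
    G (insert a s) = gen a * G s := by
  rw [G, G, Finset.sort_insert _ h1 h2, List.map_cons, List.prod_cons]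

lemma gen_mul_G_mem (s : Finset (Fin n)) (a : Fin n) :
    gen a * G s ∈ Submodule.span ℝ (G '' {t : Finset (Fin n) | t ⊆ insert a s}) := by
  induction s using Finset.strongInduction generalizing a with
  | _ s ih =>
    rcases s.eq_empty_or_nonempty with rfl | hne
    · rw [G_empty, mul_one]
      have : gen a = G {a} := by rw [G, Finset.sort_singleton]; simp
      rw [this]
      exact Submodule.subset_span ⟨{a}, by simp, rfl⟩
    · set m := s.min' hne with hm
      have hmem : m ∈ s := s.min'_mem hne
      set s' := s.erase m with hs'
      have hss : s = insert m s' := by rw [hs', Finset.insert_erase hmem]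
      have hlt : ∀ b ∈ s', m < b := fun b hb =>
        lt_of_le_of_ne (s.min'_le b (Finset.mem_of_mem_erase hb))
          (Ne.symm (Finset.ne_of_mem_erase hb))
      have hGs : G s = gen m * G s' := by
        rw [hss, G_insert (fun b hb => (hlt b hb).le) (Finset.notMem_erase _ _)]
      have hcard : s' ⊂ s := Finset.erase_ssubset hmem
      rcases lt_trichotomy a m with ham | rfl | hma
      · -- a < m : direct
        have : gen a * G s = G (insert a s) := by
          rw [G_insert (fun b hb => (ham.trans_le (s.min'_le b hb)).le)
            (fun ha => absurd (s.min'_le a ha) (not_le.mpr ham))]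
        rw [this]
        exact Submodule.subset_span ⟨insert a s, by simp, rfl⟩
      · -- a = m
        rw [hGs, ← mul_assoc, gen_sq, Algebra.algebraMap_eq_smul_one, smul_mul_assoc, one_mul]
        refine Submodule.smul_mem _ _ (Submodule.subset_span ⟨s', ?_, rfl⟩)
        exact fun b hb => Finset.mem_insert_of_mem (Finset.mem_of_mem_erase hb)
      · -- m < a
        rw [hGs, ← mul_assoc, gen_anticomm (ne_of_gt hma), neg_mul, mul_assoc]
        refine Submodule.neg_mem _ ?_
        have hIH := ih s' hcard a
        -- gen m * (gen a * G s') ∈ span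
        have key : ∀ v ∈ Submodule.span ℝ (G '' {t : Finset (Fin n) | t ⊆ insert a s'}),
            gen m * v ∈ Submodule.span ℝ (G '' {t : Finset (Fin n) | t ⊆ insert a s}) := by
          intro v hv
          induction hv using Submodule.span_induction with
          | mem w hw =>
            obtain ⟨t, ht, rfl⟩ := hw
            have htm : ∀ b ∈ t, m < b := by
              intro b hb
              rcases Finset.mem_insert.mp (ht hb) with rfl | hb'
              · exact hma
              · exact hlt b hb'
            have : gen m * G t = G (insert m t) := by
              rw [G_insert (fun b hb => (htm b hb).le) (fun hc => lt_irrefl m (htm m hc))]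
            rw [this]
            refine Submodule.subset_span ⟨insert m t, ?_, rfl⟩
            intro b hb
            rcases Finset.mem_insert.mp hb with rfl | hb'
            · exact Finset.mem_insert_of_mem (by rw [hss]; exact Finset.mem_insert_self _ _)
            · rcases Finset.mem_insert.mp (ht hb') with rfl | h''
              · exact Finset.mem_insert_self _ _
              · exact Finset.mem_insert_of_mem (by rw [hss]; exact Finset.mem_insert_of_mem h'')
          | zero => simp
          | add u w _ _ hu hw => rw [mul_add]; exact Submodule.add_mem _ hu hw
          | smul c u _ hu => rw [mul_smul_comm]; exact Submodule.smul_mem _ _ hu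
        exact key _ hIH


lemma gen_mul_mem {a : Fin n} {v : Cl n}
    (hv : v ∈ Submodule.span ℝ (Set.range (G : Finset (Fin n) → Cl n))) :
    gen a * v ∈ Submodule.span ℝ (Set.range (G : Finset (Fin n) → Cl n)) := by
  induction hv using Submodule.span_induction with
  | mem w hw =>
    obtain ⟨t, rfl⟩ := hw
    exact Submodule.span_mono (Set.image_subset_range _ _) (gen_mul_G_mem t a)
  | zero => rw [mul_zero]; exact Submodule.zero_mem _
  | add u w _ _ hu hw => rw [mul_add]; exact Submodule.add_mem _ hu hw
  | smul c u _ hu => rw [mul_smul_comm]; exact Submodule.smul_mem _ _ hu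

lemma listProd_mem (l : List (Fin n)) :
    (l.map gen).prod ∈ Submodule.span ℝ (Set.range (G : Finset (Fin n) → Cl n)) := by
  induction l with
  | nil =>
    exact Submodule.subset_span ⟨∅, G_empty⟩
  | cons a l ih =>
    rw [List.map_cons, List.prod_cons]
    exact gen_mul_mem ih

lemma mul_mem_span {x y : Cl n}
    (hx : x ∈ Submodule.span ℝ (Set.range (G : Finset (Fin n) → Cl n)))
    (hy : y ∈ Submodule.span ℝ (Set.range (G : Finset (Fin n) → Cl n))) :
    x * y ∈ Submodule.span ℝ (Set.range (G : Finset (Fin n) → Cl n)) := by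
  induction hy using Submodule.span_induction with
  | mem w hw =>
    obtain ⟨t, rfl⟩ := hw
    induction hx using Submodule.span_induction with
    | mem u hu =>
      obtain ⟨s, rfl⟩ := hu
      have : G s * G t = (((s.sort (· ≤ ·)) ++ (t.sort (· ≤ ·))).map gen).prod := by
        rw [List.map_append, List.prod_append]; rfl
      rw [this]
      exact listProd_mem _
    | zero => rw [zero_mul]; exact Submodule.zero_mem _
    | add u w _ _ hu hw => rw [add_mul]; exact Submodule.add_mem _ hu hw
    | smul c u _ hu => rw [smul_mul_assoc]; exact Submodule.smul_mem _ _ hu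
  | zero => rw [mul_zero]; exact Submodule.zero_mem _
  | add u w _ _ hu hw => rw [mul_add]; exact Submodule.add_mem _ hu hw
  | smul c u _ hu => rw [mul_smul_comm]; exact Submodule.smul_mem _ _ hu

lemma mem_span_G (x : Cl n) :
    x ∈ Submodule.span ℝ (Set.range (G : Finset (Fin n) → Cl n)) := by
  induction x using CliffordAlgebra.induction with
  | algebraMap r =>
    rw [Algebra.algebraMap_eq_smul_one]
    refine Submodule.smul_mem _ _ (Submodule.subset_span ⟨∅, G_empty⟩)
  | ι m =>
    have hm : CliffordAlgebra.ι (Qneg n) m = ∑ i : Fin n, m i • gen i := by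
      conv_lhs => rw [← Finset.univ_sum_single m]
      rw [map_sum]
      refine Finset.sum_congr rfl fun i _ => ?_
      have : Pi.single i (m i) = m i • (Pi.single i 1 : Fin n → ℝ) := by
        rw [← Pi.single_smul, smul_eq_mul, mul_one]
      rw [this, map_smul, gen]
    rw [hm]
    refine Submodule.sum_mem _ fun i _ => Submodule.smul_mem _ _ ?_
    exact Submodule.subset_span ⟨{i}, by rw [G, Finset.sort_singleton]; simp⟩
  | mul x y hx hy => exact mul_mem_span hx hy
  | add x y hx hy => exact Submodule.add_mem _ hx hy

instance : Module.Finite ℝ (Cl n) :=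
  ⟨by
    rw [Submodule.fg_def]
    exact ⟨Set.range G, Set.finite_range G, by rw [eq_top_iff]; intro x _; exact mem_span_G x⟩⟩


/-! ### Analysis infrastructure -/

section Analysis
variable {n : ℕ}

/-- Left multiplication as a continuous linear map. -/
def mulL (c : Cl n) : Cl n →L[ℝ] Cl n :=
  LinearMap.toContinuousLinearMap (LinearMap.mulLeft ℝ c)

lemma mulL_apply (c v : Cl n) : mulL c v = c * v := rfl

/-- Reflection as a linear map. -/
def reflLM (i : Fin n) : Pt n →ₗ[ℝ] Pt n where
  toFun := refl i
  map_add' x y := by funext t; simp only [refl, Pi.add_apply]; split_ifs <;> ring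
  map_smul' c x := by
    funext t
    simp only [refl, Pi.smul_apply, RingHom.id_apply, smul_eq_mul]
    split_ifs <;> ring

def reflL (i : Fin n) : Pt n →L[ℝ] Pt n := LinearMap.toContinuousLinearMap (reflLM i)

lemma reflL_apply (i : Fin n) (x : Pt n) : reflL i x = refl i x := rfl

lemma refl_succ_self (i : Fin n) (x : Pt n) : refl i x i.succ = -(x i.succ) := by
  simp [refl]

lemma refl_succ_ne {i j : Fin n} (h : j ≠ i) (x : Pt n) : refl i x j.succ = x j.succ := by
  rw [refl, if_neg (fun hc => h (Fin.succ_injective n hc))]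

lemma refl_single {i j : Fin n} (h : i ≠ j) :
    refl j (Pi.single i.succ 1) = (Pi.single i.succ 1 : Pt n) := by
  funext t
  rw [refl]
  split_ifs with ht
  · subst ht
    rw [Pi.single_eq_of_ne (fun hc => h (Fin.succ_injective n hc).symm)]
    simp
  · rfl

lemma refl_comm (i j : Fin n) (x : Pt n) : refl i (refl j x) = refl j (refl i x) := by
  funext t
  simp only [refl]
  split_ifs <;> rfl

lemma allNZ_refl (i : Fin n) {x : Pt n} (hx : allNZ x) : allNZ (refl i x) := by
  intro t
  rcases eq_or_ne t i with rfl | hne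
  · rw [refl_succ_self]; exact neg_ne_zero.mpr (hx t)
  · rw [refl_succ_ne hne]; exact hx t

lemma isOpen_allNZ : IsOpen {y : Pt n | allNZ y} := by
  have : {y : Pt n | allNZ y} = ⋂ i : Fin n, {y : Pt n | y i.succ ≠ 0} := by
    ext y; simp [allNZ, Set.mem_iInter]
  rw [this]
  exact isOpen_iInter_of_finite fun i =>
    isOpen_compl_iff.mpr (isClosed_eq (continuous_apply i.succ) continuous_const)

lemma imA_mul (C : Finset (Fin n)) (y : Pt n) (w : Cl n) :
    imA C y * w = ∑ i ∈ C, y i.succ • (gen i * w) := by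
  rw [imA, Finset.sum_mul]
  exact Finset.sum_congr rfl fun i _ => smul_mul_assoc _ _ _

lemma gen_mul_gen_mul {i j : Fin n} (h : i ≠ j) (v : Cl n) :
    gen i * (gen j * v) = -(gen j * (gen i * v)) := by
  rw [← mul_assoc, gen_anticomm h, neg_mul, mul_assoc]

lemma imA_mul_imA_mul_expand (C D : Finset (Fin n)) (u v : Pt n) (c : Cl n) :
    imA C u * (imA D v * c) =
      ∑ i ∈ C, ∑ j ∈ D, u i.succ • (v j.succ • (gen i * (gen j * c))) := by
  rw [imA_mul C]
  refine Finset.sum_congr rfl fun i hi => ?_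
  rw [imA_mul D, Finset.mul_sum, Finset.smul_sum]
  exact Finset.sum_congr rfl fun j hj => by rw [mul_smul_comm]

lemma imA_mul_imA_mul {A B : Finset (Fin n)} (hAB : Disjoint A B) (u v : Pt n) (c : Cl n) :
    imA A u * (imA B v * c) = -(imA B v * (imA A u * c)) := by
  rw [imA_mul_imA_mul_expand, imA_mul_imA_mul_expand]
  rw [Finset.sum_congr rfl fun i (hi : i ∈ A) => Finset.sum_congr rfl
    fun j (hj : j ∈ B) => ?_]
  · rw [← Finset.sum_neg_distrib, Finset.sum_comm]
    exact Finset.sum_congr rfl fun i _ => by rw [Finset.sum_neg_distrib]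
  · have hij : i ≠ j := fun hEq => Finset.disjoint_left.mp hAB hi (hEq ▸ hj)
    rw [gen_mul_gen_mul hij, smul_neg, smul_neg, smul_comm]

end Analysis

section PD
variable {n : ℕ} {x : Pt n} {g h : Pt n → Cl n} {t : Fin (n+1)}

lemma pd_add (hg : DifferentiableAt ℝ g x) (hh : DifferentiableAt ℝ h x) :
    pd t (fun y => g y + h y) x = pd t g x + pd t h x := by
  unfold pd; rw [fderiv_fun_add hg hh]; rfl

lemma pd_sub (hg : DifferentiableAt ℝ g x) (hh : DifferentiableAt ℝ h x) :
    pd t (fun y => g y - h y) x = pd t g x - pd t h x := by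
  unfold pd; rw [fderiv_fun_sub hg hh]; rfl

lemma pd_neg : pd t (fun y => -g y) x = -pd t g x := by
  unfold pd; rw [fderiv_fun_neg]; rfl

lemma pd_const_smul (c : ℝ) (hg : DifferentiableAt ℝ g x) :
    pd t (fun y => c • g y) x = c • pd t g x := by
  unfold pd; rw [fderiv_fun_const_smul hg c]; rfl

lemma pd_sum {ι : Type*} (s : Finset ι) (g : ι → Pt n → Cl n)
    (hg : ∀ a ∈ s, DifferentiableAt ℝ (g a) x) :
    pd t (fun y => ∑ a ∈ s, g a y) x = ∑ a ∈ s, pd t (g a) x := by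
  unfold pd; rw [fderiv_fun_sum hg]; simp

lemma pd_clm (L : Cl n →L[ℝ] Cl n) (hg : DifferentiableAt ℝ g x) :
    pd t (fun y => L (g y)) x = L (pd t g x) := by
  have hc : HasFDerivAt (fun y => L (g y)) (L.comp (fderiv ℝ g x)) x :=
    L.hasFDerivAt.comp x hg.hasFDerivAt
  rw [pd, hc.fderiv]
  rfl

lemma pd_const_mul (c : Cl n) (hg : DifferentiableAt ℝ g x) :
    pd t (fun y => c * g y) x = c * pd t g x :=
  pd_clm (mulL c) hg

lemma pd_smul_fun {c : Pt n → ℝ} {c' : Pt n →L[ℝ] ℝ} (hc : HasFDerivAt c c' x)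
    (hg : DifferentiableAt ℝ g x) :
    pd t (fun y => c y • g y) x = c' (Pi.single t 1) • g x + c x • pd t g x := by
  unfold pd
  rw [(hc.fun_smul hg.hasFDerivAt).fderiv]
  simp [add_comm]

/-- The coordinate projection as a continuous linear map. -/
def coordL (s : Fin (n+1)) : Pt n →L[ℝ] ℝ := ContinuousLinearMap.proj s

lemma hasF_coord (s : Fin (n+1)) (x : Pt n) :
    HasFDerivAt (fun y : Pt n => y s) (coordL s) x :=
  (coordL s).hasFDerivAt

lemma pd_coord_smul (s : Fin (n+1)) (hg : DifferentiableAt ℝ g x) :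
    pd t (fun y => y s • g y) x = (Pi.single t 1 : Pt n) s • g x + x s • pd t g x := by
  rw [pd_smul_fun (hasF_coord s x) hg]; rfl

lemma single_succ_ne {i j : Fin n} (h : i ≠ j) :
    (Pi.single i.succ 1 : Pt n) j.succ = 0 :=
  Pi.single_eq_of_ne (fun hc => h (Fin.succ_injective n hc).symm) 1

lemma pd_coord_smul_ne {i j : Fin n} (hij : i ≠ j) (hg : DifferentiableAt ℝ g x) :
    pd i.succ (fun y => y j.succ • g y) x = x j.succ • pd i.succ g x := by
  rw [pd_coord_smul j.succ hg, single_succ_ne hij, zero_smul, zero_add]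

lemma hasF_quot (c : ℝ) (j : Fin n) (hx : x j.succ ≠ 0) :
    HasFDerivAt (fun y : Pt n => c / y j.succ)
      ((ContinuousLinearMap.smulRight (1 : ℝ →L[ℝ] ℝ) (-(c / x j.succ ^ 2))).comp
        (coordL j.succ)) x := by
  have h1 : HasDerivAt (fun s : ℝ => c / s) (-(c / x j.succ ^ 2)) (x j.succ) := by
    have h := (hasDerivAt_const (x j.succ) c).div (hasDerivAt_id (x j.succ)) hx
    refine h.congr_deriv ?_
    simp only [id]; ring
  exact h1.hasFDerivAt.comp x (hasF_coord j.succ x)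

lemma pd_quot_smul {i j : Fin n} (c : ℝ) (hij : i ≠ j) (hx : x j.succ ≠ 0)
    (hg : DifferentiableAt ℝ g x) :
    pd i.succ (fun y => (c / y j.succ) • g y) x = (c / x j.succ) • pd i.succ g x := by
  rw [pd_smul_fun (hasF_quot c j hx) hg]
  have hz : ((ContinuousLinearMap.smulRight (1 : ℝ →L[ℝ] ℝ) (-(c / x j.succ ^ 2))).comp
      (coordL j.succ)) (Pi.single i.succ 1) = 0 := by
    have : coordL (n := n) j.succ (Pi.single i.succ 1) = 0 := single_succ_ne hij
    rw [ContinuousLinearMap.comp_apply, this]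
    simp
  rw [hz, zero_smul, zero_add]

lemma pd_comp_refl {i j : Fin n} (hij : i ≠ j) (hg : DifferentiableAt ℝ g (refl j x)) :
    pd i.succ (fun y => g (refl j y)) x = pd i.succ g (refl j x) := by
  have h2 : HasFDerivAt (fun y : Pt n => refl j y) (reflL j) x := (reflL j).hasFDerivAt
  have hc : HasFDerivAt (fun y => g (refl j y))
      ((fderiv ℝ g (refl j x)).comp (reflL j)) x :=
    HasFDerivAt.comp x hg.hasFDerivAt h2
  rw [pd, hc.fderiv, ContinuousLinearMap.comp_apply]
  show fderiv ℝ g (refl j x) (refl j (Pi.single i.succ 1)) = _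
  rw [refl_single hij]
  rfl

end PD

section TLem
variable {n : ℕ} {k : Fin n → ℝ} {x : Pt n} {g h : Pt n → Cl n} {i j : Fin n}
  {Ω : Set (Pt n)}

lemma T_def (g : Pt n → Cl n) (x : Pt n) :
    T k i g x = pd i.succ g x + (k i / x i.succ) • (g x - g (refl i x)) := rfl

lemma T_add (hg : DifferentiableAt ℝ g x) (hh : DifferentiableAt ℝ h x) :
    T k i (fun y => g y + h y) x = T k i g x + T k i h x := by
  simp only [T_def, pd_add hg hh]
  module

lemma T_sub (hg : DifferentiableAt ℝ g x) (hh : DifferentiableAt ℝ h x) :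
    T k i (fun y => g y - h y) x = T k i g x - T k i h x := by
  simp only [T_def, pd_sub hg hh]
  module

lemma T_neg : T k i (fun y => -g y) x = -T k i g x := by
  simp only [T_def, pd_neg]
  module

lemma T_const_smul (c : ℝ) (hg : DifferentiableAt ℝ g x) :
    T k i (fun y => c • g y) x = c • T k i g x := by
  simp only [T_def, pd_const_smul c hg]
  module

lemma T_sum {ι : Type*} (s : Finset ι) (g : ι → Pt n → Cl n)
    (hg : ∀ a ∈ s, DifferentiableAt ℝ (g a) x) :
    T k i (fun y => ∑ a ∈ s, g a y) x = ∑ a ∈ s, T k i (g a) x := by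
  simp only [T_def, pd_sum s g hg]
  rw [← Finset.sum_sub_distrib, Finset.smul_sum, ← Finset.sum_add_distrib]

lemma T_clm (L : Cl n →L[ℝ] Cl n) (hg : DifferentiableAt ℝ g x) :
    T k i (fun y => L (g y)) x = L (T k i g x) := by
  simp only [T_def, pd_clm L hg, map_add, map_smul, map_sub]

lemma T_const_mul (c : Cl n) (hg : DifferentiableAt ℝ g x) :
    T k i (fun y => c * g y) x = c * T k i g x :=
  T_clm (mulL c) hg

lemma T_coord_smul (hij : i ≠ j) (hg : DifferentiableAt ℝ g x) :
    T k i (fun y => y j.succ • g y) x = x j.succ • T k i g x := by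
  simp only [T_def, pd_coord_smul_ne hij hg]
  rw [refl_succ_ne (Ne.symm hij)]
  module

/-- differentiability of `pd` for `C²` functions -/
lemma diffAt_pd (hopen : IsOpen Ω) (hg : ContDiffOn ℝ 2 g Ω) (hx : x ∈ Ω)
    (t : Fin (n+1)) : DifferentiableAt ℝ (pd t g) x := by
  have hca : ContDiffAt ℝ 2 g x := hg.contDiffAt (hopen.mem_nhds hx)
  have hΦ : DifferentiableAt ℝ (fderiv ℝ g) x :=
    (hca.fderiv_right (m := 1) (by norm_num)).differentiableAt (by norm_num)
  exact ((ContinuousLinearMap.apply ℝ (Cl n) (Pi.single t 1)).differentiableAt).comp x hΦ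

lemma diffAt_of_C2 (hopen : IsOpen Ω) (hg : ContDiffOn ℝ 2 g Ω) (hx : x ∈ Ω) :
    DifferentiableAt ℝ g x :=
  (hg.contDiffAt (hopen.mem_nhds hx)).differentiableAt (by norm_num)

lemma diffAt_quot (c : ℝ) (j : Fin n) (hx : x j.succ ≠ 0) :
    DifferentiableAt ℝ (fun y : Pt n => c / y j.succ) x :=
  (hasF_quot c j hx).differentiableAt

lemma diffAt_comp_refl (hg : DifferentiableAt ℝ g (refl i x)) :
    DifferentiableAt ℝ (fun y => g (refl i y)) x :=
  DifferentiableAt.comp x hg ((reflL i).hasFDerivAt.differentiableAt)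

lemma diffAt_T (hopen : IsOpen Ω) (hinv : ReflInv Ω) (hg : ContDiffOn ℝ 2 g Ω)
    (hx : x ∈ Ω) (hnz : allNZ x) : DifferentiableAt ℝ (T k i g) x := by
  have hgx := diffAt_of_C2 hopen hg hx
  have hgr : DifferentiableAt ℝ (fun y => g (refl i y)) x :=
    diffAt_comp_refl (diffAt_of_C2 hopen hg (hinv i x hx))
  exact (diffAt_pd hopen hg hx i.succ).add
    ((diffAt_quot (k i) i (hnz i)).smul (hgx.sub hgr))

/-- Schwarz symmetry of second partials. -/
lemma pd_pd_symm (hopen : IsOpen Ω) (hg : ContDiffOn ℝ 2 g Ω) (hx : x ∈ Ω)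
    (s t : Fin (n+1)) : pd s (pd t g) x = pd t (pd s g) x := by
  have hca : ContDiffAt ℝ 2 g x := hg.contDiffAt (hopen.mem_nhds hx)
  have hΦ : DifferentiableAt ℝ (fderiv ℝ g) x :=
    (hca.fderiv_right (m := 1) (by norm_num)).differentiableAt (by norm_num)
  have key : ∀ v w : Pt n, fderiv ℝ (fun y => fderiv ℝ g y w) x v
      = fderiv ℝ (fderiv ℝ g) x v w := by
    intro v w
    have hc : HasFDerivAt (fun y => fderiv ℝ g y w)
        ((ContinuousLinearMap.apply ℝ (Cl n) w).comp (fderiv ℝ (fderiv ℝ g) x)) x :=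
      (ContinuousLinearMap.apply ℝ (Cl n) w).hasFDerivAt.comp x hΦ.hasFDerivAt
    rw [hc.fderiv]
    rfl
  have hsymm := hca.isSymmSndFDerivAt (by norm_num)
  show fderiv ℝ (fun y => fderiv ℝ g y (Pi.single t 1)) x (Pi.single s 1) = _
  rw [key, hsymm (Pi.single s 1) (Pi.single t 1), ← key]
  rfl

/-- Expansion of `∂ᵢ(T_j g)` for `i ≠ j`. -/
lemma pd_T (hopen : IsOpen Ω) (hinv : ReflInv Ω) (hg : ContDiffOn ℝ 2 g Ω)
    (hx : x ∈ Ω) (hnz : allNZ x) (hij : i ≠ j) :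
    pd i.succ (T k j g) x = pd i.succ (pd j.succ g) x
      + (k j / x j.succ) • (pd i.succ g x - pd i.succ g (refl j x)) := by
  have hgx := diffAt_of_C2 hopen hg hx
  have hgrx := diffAt_of_C2 hopen hg (hinv j x hx)
  have hgr : DifferentiableAt ℝ (fun y => g (refl j y)) x := diffAt_comp_refl hgrx
  have hq := diffAt_quot (k j) j (hnz j)
  have e : T k j g = fun y => pd j.succ g y
      + ((k j / y j.succ) • g y - (k j / y j.succ) • g (refl j y)) := by
    funext y
    rw [T_def, smul_sub]
  rw [e, pd_add (diffAt_pd hopen hg hx j.succ) ((hq.fun_smul hgx).fun_sub (hq.fun_smul hgr)),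
    pd_sub (hq.fun_smul hgx) (hq.fun_smul hgr),
    pd_quot_smul (k j) hij (hnz j) hgx,
    pd_quot_smul (k j) hij (hnz j) hgr,
    pd_comp_refl hij hgrx, smul_sub]

/-- The Dunkl operators `T_i`, `T_j` commute for `i ≠ j`. -/
lemma T_comm (hopen : IsOpen Ω) (hinv : ReflInv Ω) (hg : ContDiffOn ℝ 2 g Ω)
    (hx : x ∈ Ω) (hnz : allNZ x) (hij : i ≠ j) :
    T k i (T k j g) x = T k j (T k i g) x := by
  have hrj : refl j x ∈ Ω := hinv j x hx
  have hri : refl i x ∈ Ω := hinv i x hx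
  have eTj : T k j g (refl i x) = pd j.succ g (refl i x)
      + (k j / x j.succ) • (g (refl i x) - g (refl j (refl i x))) := by
    rw [T_def, refl_succ_ne (Ne.symm hij)]
  have eTi : T k i g (refl j x) = pd i.succ g (refl j x)
      + (k i / x i.succ) • (g (refl j x) - g (refl i (refl j x))) := by
    rw [T_def, refl_succ_ne hij]
  have L : T k i (T k j g) x = pd i.succ (pd j.succ g) x
      + (k j / x j.succ) • (pd i.succ g x - pd i.succ g (refl j x))
      + (k i / x i.succ) • ((pd j.succ g x
          + (k j / x j.succ) • (g x - g (refl j x)))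
        - (pd j.succ g (refl i x)
          + (k j / x j.succ) • (g (refl i x) - g (refl j (refl i x))))) := by
    rw [T_def, pd_T hopen hinv hg hx hnz hij, ← T_def (k := k), ← eTj]
  have R : T k j (T k i g) x = pd j.succ (pd i.succ g) x
      + (k i / x i.succ) • (pd j.succ g x - pd j.succ g (refl i x))
      + (k j / x j.succ) • ((pd i.succ g x
          + (k i / x i.succ) • (g x - g (refl i x)))
        - (pd i.succ g (refl j x)
          + (k i / x i.succ) • (g (refl j x) - g (refl i (refl j x))))) := by
    rw [T_def, pd_T hopen hinv hg hx hnz (Ne.symm hij), ← T_def (k := k), ← eTi]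
  rw [L, R, pd_pd_symm hopen hg hx i.succ j.succ, refl_comm j i]
  module

end TLem

section DLem
variable {n : ℕ} {k : Fin n → ℝ} {x : Pt n} {g h : Pt n → Cl n} {i j : Fin n}
  {Ω : Set (Pt n)} {A B : Finset (Fin n)}

lemma D_def (g : Pt n → Cl n) (x : Pt n) :
    dunklDiracA k A g x = ∑ i ∈ A, gen i * T k i g x := rfl

lemma diffAt_imA_mul (C : Finset (Fin n)) (hg : DifferentiableAt ℝ g x) :
    DifferentiableAt ℝ (fun y => imA C y * g y) x := by
  have e : (fun y => imA C y * g y) = fun y => ∑ i ∈ C, y i.succ • mulL (gen i) (g y) :=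
    funext fun y => imA_mul C y (g y)
  rw [e]
  exact DifferentiableAt.fun_sum fun i _ =>
    ((hasF_coord i.succ x).differentiableAt).fun_smul (((mulL (gen i)).differentiableAt).comp x hg)

lemma contDiffOn_imA_mul (C : Finset (Fin n)) (hg : ContDiffOn ℝ 2 g Ω) :
    ContDiffOn ℝ 2 (fun y => imA C y * g y) Ω := by
  have e : (fun y => imA C y * g y) = fun y => ∑ i ∈ C, y i.succ • mulL (gen i) (g y) :=
    funext fun y => imA_mul C y (g y)
  rw [e]
  refine ContDiffOn.sum fun i _ => ContDiffOn.fun_smul ?_ ((mulL (gen i)).contDiff.comp_contDiffOn hg)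
  exact (coordL (n := n) i.succ).contDiff.contDiffOn

lemma diffAt_D (hopen : IsOpen Ω) (hinv : ReflInv Ω) (hg : ContDiffOn ℝ 2 g Ω)
    (hx : x ∈ Ω) (hnz : allNZ x) : DifferentiableAt ℝ (dunklDiracA k A g) x := by
  have e : dunklDiracA k A g = fun y => ∑ i ∈ A, mulL (gen i) (T k i g y) := rfl
  rw [e]
  exact DifferentiableAt.fun_sum fun i _ =>
    ((mulL (gen i)).differentiableAt).comp x (diffAt_T hopen hinv hg hx hnz)

/-- Statement (1) in pointwise form. -/
lemma D_imA_mul (hAB : Disjoint A B) (hg : DifferentiableAt ℝ g x) :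
    dunklDiracA k A (fun y => imA B y * g y) x = -(imA B x * dunklDiracA k A g x) := by
  have e : (fun y => imA B y * g y) = fun y => ∑ j ∈ B, y j.succ • (gen j * g y) :=
    funext fun y => imA_mul B y (g y)
  have hdiff : ∀ j ∈ B, DifferentiableAt ℝ (fun y => y j.succ • (gen j * g y)) x :=
    fun j _ => ((hasF_coord j.succ x).differentiableAt).smul
      (((mulL (gen j)).differentiableAt).comp x hg)
  have hmul : ∀ j : Fin n, DifferentiableAt ℝ (fun y => gen j * g y) x :=
    fun j => ((mulL (gen j)).differentiableAt).comp x hg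
  calc dunklDiracA k A (fun y => imA B y * g y) x
      = ∑ i ∈ A, ∑ j ∈ B, x j.succ • (gen i * (gen j * T k i g x)) := by
        rw [D_def, e]
        refine Finset.sum_congr rfl fun i hi => ?_
        rw [T_sum B _ hdiff, Finset.mul_sum]
        refine Finset.sum_congr rfl fun j hj => ?_
        have hij : i ≠ j := fun hEq => Finset.disjoint_left.mp hAB hi (hEq ▸ hj)
        rw [T_coord_smul hij (hmul j), T_const_mul (gen j) hg, mul_smul_comm]
    _ = -∑ j ∈ B, ∑ i ∈ A, x j.succ • (gen j * (gen i * T k i g x)) := by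
        rw [Finset.sum_congr rfl fun i (hi : i ∈ A) => Finset.sum_congr rfl
          fun j (hj : j ∈ B) => ?_]
        · rw [← Finset.sum_neg_distrib, Finset.sum_comm]
          exact Finset.sum_congr rfl fun i _ => by rw [Finset.sum_neg_distrib]
        · have hij : i ≠ j := fun hEq => Finset.disjoint_left.mp hAB hi (hEq ▸ hj)
          rw [gen_mul_gen_mul hij, smul_neg]
    _ = -(imA B x * dunklDiracA k A g x) := by
        rw [D_def, imA_mul B]
        congr 1
        refine Finset.sum_congr rfl fun j hj => ?_
        rw [Finset.mul_sum, Finset.smul_sum]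

/-- Statement (2) in pointwise form. -/
lemma D_D_anticomm (hopen : IsOpen Ω) (hinv : ReflInv Ω) (hg : ContDiffOn ℝ 2 g Ω)
    (hx : x ∈ Ω) (hnz : allNZ x) (hAB : Disjoint A B) :
    dunklDiracA k A (dunklDiracA k B g) x + dunklDiracA k B (dunklDiracA k A g) x = 0 := by
  have hT : ∀ i : Fin n, DifferentiableAt ℝ (T k i g) x :=
    fun i => diffAt_T hopen hinv hg hx hnz
  have key : ∀ (C D : Finset (Fin n)), dunklDiracA k C (dunklDiracA k D g) x
      = ∑ i ∈ C, ∑ j ∈ D, gen i * (gen j * T k i (T k j g) x) := by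
    intro C D
    rw [D_def]
    refine Finset.sum_congr rfl fun i hi => ?_
    have eD : dunklDiracA k D g = fun y => ∑ j ∈ D, gen j * T k j g y := rfl
    rw [eD, T_sum D (fun j y => gen j * T k j g y)
      (fun j _ => ((mulL (gen j)).differentiableAt).comp x (hT j)), Finset.mul_sum]
    exact Finset.sum_congr rfl fun j hj => by rw [T_const_mul (gen j) (hT j)]
  rw [key A B, key B A, Finset.sum_comm (s := B) (t := A), ← Finset.sum_add_distrib]
  refine Finset.sum_eq_zero fun i hi => ?_
  rw [← Finset.sum_add_distrib]
  refine Finset.sum_eq_zero fun j hj => ?_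
  have hij : i ≠ j := fun hEq => Finset.disjoint_left.mp hAB hi (hEq ▸ hj)
  rw [T_comm hopen hinv hg hx hnz (Ne.symm hij), gen_mul_gen_mul hij, neg_add_cancel]

lemma D_neg : dunklDiracA k A (fun y => -g y) x = -dunklDiracA k A g x := by
  rw [D_def, D_def, ← Finset.sum_neg_distrib]
  exact Finset.sum_congr rfl fun i _ => by rw [T_neg, mul_neg]

/-- `D` applied to `½ • (g₁ - g₂ - g₃)`. -/
lemma D_comb {g1 g2 g3 : Pt n → Cl n} (h1 : DifferentiableAt ℝ g1 x)
    (h2 : DifferentiableAt ℝ g2 x) (h3 : DifferentiableAt ℝ g3 x) :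
    dunklDiracA k A (fun y => (2:ℝ)⁻¹ • (g1 y - g2 y - g3 y)) x
      = (2:ℝ)⁻¹ • (dunklDiracA k A g1 x - dunklDiracA k A g2 x - dunklDiracA k A g3 x) := by
  have e1 : ∀ i : Fin n, T k i (fun y => (2:ℝ)⁻¹ • (g1 y - g2 y - g3 y)) x
      = (2:ℝ)⁻¹ • (T k i g1 x - T k i g2 x - T k i g3 x) := by
    intro i
    rw [T_const_smul (2:ℝ)⁻¹ ((h1.fun_sub h2).fun_sub h3), T_sub (h1.fun_sub h2) h3, T_sub h1 h2]
  rw [D_def, D_def, D_def, D_def]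
  rw [Finset.sum_congr rfl fun i (_ : i ∈ A) => by rw [e1 i]]
  rw [← Finset.sum_sub_distrib, ← Finset.sum_sub_distrib, Finset.smul_sum]
  exact Finset.sum_congr rfl fun i _ => by rw [mul_smul_comm, mul_sub, mul_sub]

/-- `T` only depends on values on an open reflection-stable neighbourhood. -/
lemma T_congr {V : Set (Pt n)} (hV : IsOpen V) (hgh : ∀ y ∈ V, g y = h y)
    (hx : x ∈ V) (hrx : refl i x ∈ V) : T k i g x = T k i h x := by
  have hpd : pd i.succ g x = pd i.succ h x := by
    unfold pd
    rw [Filter.EventuallyEq.fderiv_eq (Filter.eventuallyEq_of_mem (hV.mem_nhds hx) hgh)]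
  rw [T_def, T_def, hpd, hgh x hx, hgh _ hrx]

lemma D_congr {V : Set (Pt n)} (hV : IsOpen V) (hgh : ∀ y ∈ V, g y = h y)
    (hx : x ∈ V) (hrx : ∀ i ∈ A, refl i x ∈ V) :
    dunklDiracA k A g x = dunklDiracA k A h x := by
  rw [D_def, D_def]
  exact Finset.sum_congr rfl fun i hi => by
    rw [T_congr hV hgh hx (hrx i hi)]

end DLem

end Dunkl

open Dunkl

/-- Commutation relations between the intermediate operators associated with
disjoint subsets `A, B ⊆ {1,…,n}`. -/
theorem statement17 (n : ℕ) (hn : 1 ≤ n) (k : Fin n → ℝ) (A B : Finset (Fin n))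
    (hAB : Disjoint A B) (Ω : Set (Pt n)) (hopen : IsOpen Ω) (hinv : ReflInv Ω)
    (f : Pt n → Cl n) (hf : ContDiffOn ℝ 2 f Ω) :
    ∀ x ∈ Ω, allNZ x →
      (dunklDiracA k A (fun y => imA B y * f y) x + imA B x * dunklDiracA k A f x = 0) ∧
      (dunklDiracA k A (dunklDiracA k B f) x + dunklDiracA k B (dunklDiracA k A f) x = 0) ∧
      (casimirA k A (fun y => imA B y * f y) x = imA B x * casimirA k A f x) ∧
      (casimirA k A (dunklDiracA k B f) x = dunklDiracA k B (casimirA k A f) x) := by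
  intro x hx hnz
  have hU : IsOpen (Ω ∩ {y : Pt n | allNZ y}) := hopen.inter isOpen_allNZ
  have hxV : x ∈ Ω ∩ {y : Pt n | allNZ y} := ⟨hx, hnz⟩
  have hfx : DifferentiableAt ℝ f x := diffAt_of_C2 hopen hf hx
  have hBA : Disjoint B A := hAB.symm
  have hgA : ContDiffOn ℝ 2 (fun z => imA A z * f z) Ω := contDiffOn_imA_mul A hf
  have hDAf : DifferentiableAt ℝ (dunklDiracA k A f) x := diffAt_D hopen hinv hf hx hnz
  have cas_def : ∀ g : Pt n → Cl n, casimirA k A g x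
      = (2:ℝ)⁻¹ • (imA A x * dunklDiracA k A g x
        - dunklDiracA k A (fun y => imA A y * g y) x - g x) := fun g => rfl
  refine ⟨?_, ?_, ?_, ?_⟩
  · rw [D_imA_mul hAB hfx]
    exact neg_add_cancel _
  · exact D_D_anticomm hopen hinv hf hx hnz hAB
  · -- statement (3)
    simp only [cas_def]
    rw [D_imA_mul hAB hfx]
    rw [show (fun y => imA A y * (imA B y * f y)) = fun y => -(imA B y * (imA A y * f y))
      from funext fun y => imA_mul_imA_mul hAB y y (f y)]
    rw [D_neg, D_imA_mul hAB (diffAt_imA_mul A hfx)]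
    rw [mul_neg, imA_mul_imA_mul hAB x x (dunklDiracA k A f x), neg_neg, neg_neg]
    rw [mul_smul_comm, mul_sub, mul_sub]
  · -- statement (4)
    simp only [cas_def]
    -- first term
    have h2f : dunklDiracA k A (dunklDiracA k B f) x
        = -(dunklDiracA k B (dunklDiracA k A f) x) :=
      eq_neg_of_add_eq_zero_left (D_D_anticomm hopen hinv hf hx hnz hAB)
    have ht1 : imA A x * dunklDiracA k A (dunklDiracA k B f) x
        = dunklDiracA k B (fun y => imA A y * dunklDiracA k A f y) x := by
      rw [h2f, mul_neg, ← D_imA_mul hBA hDAf]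
    -- second term
    have hcongr : ∀ y ∈ Ω ∩ {y : Pt n | allNZ y},
        imA A y * dunklDiracA k B f y
          = -(dunklDiracA k B (fun z => imA A z * f z) y) := by
      intro y hy
      rw [D_imA_mul hBA (diffAt_of_C2 hopen hf hy.1), neg_neg]
    have ht2 : dunklDiracA k A (fun y => imA A y * dunklDiracA k B f y) x
        = dunklDiracA k B (dunklDiracA k A (fun z => imA A z * f z)) x := by
      rw [D_congr hU hcongr hxV (fun i _ => ⟨hinv i x hx, allNZ_refl i hnz⟩)]
      rw [D_neg]
      have := D_D_anticomm (k := k) hopen hinv hgA hx hnz hAB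
      rw [eq_neg_of_add_eq_zero_left this, neg_neg]
    rw [ht1, ht2]
    exact (D_comb (A := B) (diffAt_imA_mul A hDAf)
      (diffAt_D hopen hinv hgA hx hnz) hfx).symm
end
end
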